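/- Let (M1,g1) and (M2,g2) be smooth connected Riemannian manifolds, f_i a positive smooth function on M_i (i=1,2), and c ∈ ℝ. The symmetric (0,2)-tensor field G_{f1f2} is a Riemannian metric on M1×M2 if and only if 0 ≤ c² · (g1(grad f1, grad f1)∘π1) · (g2(grad f2, grad f2)∘π2) < 1 everywhere on M1×M2, where grad f_i denotes the g_i-gradient of f_i. -/

import Mathlib

/-!
Since `df_x(v) = g(grad f, v)`, Cauchy–Schwarz bounds the mixed term of
`G(v, v) = f₂² |v₁|² + f₁² |v₂|² + 2 c f₁ f₂ df₁(v₁) df₂(v₂)` in absolute value by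
`2 f₁ f₂ √(c² |grad f₁|² |grad f₂|²) |v₁| |v₂|`. When `c² |grad f₁|² |grad f₂|² < 1`, AM–GM makes
this strictly smaller than `f₂² |v₁|² + f₁² |v₂|²` unless `v₁` or `v₂` vanishes, in which case the
mixed term is zero. Conversely, for `v = (-c f₁ |grad f₂|² grad f₁, f₂ grad f₂)` one finds
`G(v, v) = f₁² f₂² |grad f₂|² (1 - c² |grad f₁|² |grad f₂|²)`.
-/

open scoped Manifold
open Bundle

noncomputable section

/-- A smooth (`C^∞`) vector field on a manifold, i.e. an element of `Γ(TM)`. -/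
def SmoothVF {E : Type*} [NormedAddCommGroup E] [NormedSpace ℝ E] {H : Type*}
    [TopologicalSpace H] (I : ModelWithCorners ℝ E H) {M : Type*} [TopologicalSpace M]
    [ChartedSpace H M] [IsManifold I (⊤ : ℕ∞) M] (X : ∀ x : M, TangentSpace I x) : Prop :=
  ContMDiff I I.tangent (⊤ : ℕ∞) (fun x => (⟨x, X x⟩ : TangentBundle I M))

/-- The differential `df_x(v)` of a function, as a real number. -/
def dfn {E : Type*} [NormedAddCommGroup E] [NormedSpace ℝ E] {H : Type*}
    [TopologicalSpace H] (I : ModelWithCorners ℝ E H) {M : Type*} [TopologicalSpace M]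
    [ChartedSpace H M] (f : M → ℝ) (x : M) (v : TangentSpace I x) : ℝ :=
  mfderiv I 𝓘(ℝ, ℝ) f x v

/-- The action `X(f)` of a vector field `X` on a function `f`. -/
def vfd {E : Type*} [NormedAddCommGroup E] [NormedSpace ℝ E] {H : Type*}
    [TopologicalSpace H] (I : ModelWithCorners ℝ E H) {M : Type*} [TopologicalSpace M]
    [ChartedSpace H M] (X : ∀ x : M, TangentSpace I x) (f : M → ℝ) : M → ℝ :=
  fun x => mfderiv I 𝓘(ℝ, ℝ) f x (X x)

/-- `B` is the Lie bracket `[X, Y]` of the vector fields `X` and `Y`, characterized by its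
action `B(f) = X(Y(f)) - Y(X(f))` on smooth functions. -/
def IsLieBracket {E : Type*} [NormedAddCommGroup E] [NormedSpace ℝ E] {H : Type*}
    [TopologicalSpace H] (I : ModelWithCorners ℝ E H) {M : Type*} [TopologicalSpace M]
    [ChartedSpace H M] (X Y B : ∀ x : M, TangentSpace I x) : Prop :=
  ∀ f : M → ℝ, ContMDiff I 𝓘(ℝ, ℝ) (⊤ : ℕ∞) f →
    vfd I B f = fun x => vfd I X (vfd I Y f) x - vfd I Y (vfd I X f) x

/-- An affine (Koszul) connection on vector fields. -/
structure IsAffineConnection {E : Type*} [NormedAddCommGroup E] [NormedSpace ℝ E] {H : Type*}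
    [TopologicalSpace H] (I : ModelWithCorners ℝ E H) {M : Type*} [TopologicalSpace M]
    [ChartedSpace H M]
    (D : (∀ x : M, TangentSpace I x) → (∀ x : M, TangentSpace I x) → ∀ x : M, TangentSpace I x) :
    Prop where
  add_left : ∀ X Y Z, D (fun x => X x + Y x) Z = fun x => D X Z x + D Y Z x
  smul_left : ∀ (f : M → ℝ), ContMDiff I 𝓘(ℝ, ℝ) (⊤ : ℕ∞) f → ∀ X Y,
    D (fun x => f x • X x) Y = fun x => f x • D X Y x
  add_right : ∀ X Y Z, D X (fun x => Y x + Z x) = fun x => D X Y x + D X Z x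
  smul_const_right : ∀ (a : ℝ) (X Y), D X (fun x => a • Y x) = fun x => a • D X Y x
  leibniz : ∀ (f : M → ℝ), ContMDiff I 𝓘(ℝ, ℝ) (⊤ : ℕ∞) f → ∀ X Y,
    D X (fun x => f x • Y x) = fun x => f x • D X Y x + vfd I X f x • Y x

/-- A Riemannian metric: a pointwise bilinear, symmetric, positive definite (0,2)-tensor. -/
def IsRiemannianMetric {E : Type*} [NormedAddCommGroup E] [NormedSpace ℝ E] {H : Type*}
    [TopologicalSpace H] (I : ModelWithCorners ℝ E H) {M : Type*} [TopologicalSpace M]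
    [ChartedSpace H M] (g : ∀ x : M, TangentSpace I x → TangentSpace I x → ℝ) : Prop :=
  (∀ (x : M) (v : TangentSpace I x), IsLinearMap ℝ (g x v)) ∧
  (∀ (x : M) (v w : TangentSpace I x), g x v w = g x w v) ∧
  (∀ (x : M) (v : TangentSpace I x), v ≠ 0 → 0 < g x v v)

/-- The connections `D` and `D'` are conjugate (dual) with respect to `g`:
`X(g(Y,Z)) = g(D_X Y, Z) + g(Y, D'_X Z)` for all smooth vector fields `X, Y, Z`. -/
def Conjugate {E : Type*} [NormedAddCommGroup E] [NormedSpace ℝ E] {H : Type*}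
    [TopologicalSpace H] (I : ModelWithCorners ℝ E H) {M : Type*} [TopologicalSpace M]
    [ChartedSpace H M] [IsManifold I (⊤ : ℕ∞) M]
    (g : ∀ x : M, TangentSpace I x → TangentSpace I x → ℝ)
    (D D' : (∀ x : M, TangentSpace I x) → (∀ x : M, TangentSpace I x) → ∀ x : M, TangentSpace I x) :
    Prop :=
  ∀ X Y Z, SmoothVF I X → SmoothVF I Y → SmoothVF I Z →
    vfd I X (fun x => g x (Y x) (Z x)) = fun x => g x (D X Y x) (Z x) + g x (Y x) (D' X Z x)

/-- A dualistic structure `(g, D, D')`: a pair of affine connections conjugate w.r.t. `g`. -/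
def DualisticStructure {E : Type*} [NormedAddCommGroup E] [NormedSpace ℝ E] {H : Type*}
    [TopologicalSpace H] (I : ModelWithCorners ℝ E H) {M : Type*} [TopologicalSpace M]
    [ChartedSpace H M] [IsManifold I (⊤ : ℕ∞) M]
    (g : ∀ x : M, TangentSpace I x → TangentSpace I x → ℝ)
    (D D' : (∀ x : M, TangentSpace I x) → (∀ x : M, TangentSpace I x) → ∀ x : M, TangentSpace I x) :
    Prop :=
  IsAffineConnection I D ∧ IsAffineConnection I D' ∧ Conjugate I g D D'

/-- Torsion-freeness of a connection: `D_X Y - D_Y X = [X, Y]`. -/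
def IsTorsionFree {E : Type*} [NormedAddCommGroup E] [NormedSpace ℝ E] {H : Type*}
    [TopologicalSpace H] (I : ModelWithCorners ℝ E H) {M : Type*} [TopologicalSpace M]
    [ChartedSpace H M] [IsManifold I (⊤ : ℕ∞) M]
    (D : (∀ x : M, TangentSpace I x) → (∀ x : M, TangentSpace I x) → ∀ x : M, TangentSpace I x) :
    Prop :=
  ∀ X Y, SmoothVF I X → SmoothVF I Y → IsLieBracket I X Y (fun x => D X Y x - D Y X x)

/-- The covariant derivative `(∇g)(X, Y, Z) = X(g(Y,Z)) - g(∇_X Y, Z) - g(Y, ∇_X Z)`. -/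
def nablaG {E : Type*} [NormedAddCommGroup E] [NormedSpace ℝ E] {H : Type*}
    [TopologicalSpace H] (I : ModelWithCorners ℝ E H) {M : Type*} [TopologicalSpace M]
    [ChartedSpace H M] (g : ∀ x : M, TangentSpace I x → TangentSpace I x → ℝ)
    (D : (∀ x : M, TangentSpace I x) → (∀ x : M, TangentSpace I x) → ∀ x : M, TangentSpace I x)
    (X Y Z : ∀ x : M, TangentSpace I x) : M → ℝ :=
  fun x => vfd I X (fun y => g y (Y y) (Z y)) x - g x (D X Y x) (Z x) - g x (Y x) (D X Z x)

/-- `(M, ∇, g)` is a statistical manifold: `∇` is torsion-free and `∇g` is symmetric. -/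
def IsStatistical {E : Type*} [NormedAddCommGroup E] [NormedSpace ℝ E] {H : Type*}
    [TopologicalSpace H] (I : ModelWithCorners ℝ E H) {M : Type*} [TopologicalSpace M]
    [ChartedSpace H M] [IsManifold I (⊤ : ℕ∞) M]
    (g : ∀ x : M, TangentSpace I x → TangentSpace I x → ℝ)
    (D : (∀ x : M, TangentSpace I x) → (∀ x : M, TangentSpace I x) → ∀ x : M, TangentSpace I x) :
    Prop :=
  IsTorsionFree I D ∧
  ∀ X Y Z, SmoothVF I X → SmoothVF I Y → SmoothVF I Z →
    nablaG I g D X Y Z = nablaG I g D Y X Z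

/-- `G` is the gradient of `f` with respect to the metric `g`: `g(G, ·) = df`. -/
def IsGradient {E : Type*} [NormedAddCommGroup E] [NormedSpace ℝ E] {H : Type*}
    [TopologicalSpace H] (I : ModelWithCorners ℝ E H) {M : Type*} [TopologicalSpace M]
    [ChartedSpace H M] (g : ∀ x : M, TangentSpace I x → TangentSpace I x → ℝ)
    (f : M → ℝ) (G : ∀ x : M, TangentSpace I x) : Prop :=
  ∀ (x : M) (v : TangentSpace I x), g x (G x) v = dfn I f x v

/-- The curvature `R(X,Y)Z = D_X D_Y Z - D_Y D_X Z - D_B Z`, where `B = [X, Y]`. -/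
def curvWith {E : Type*} [NormedAddCommGroup E] [NormedSpace ℝ E] {H : Type*}
    [TopologicalSpace H] (I : ModelWithCorners ℝ E H) {M : Type*} [TopologicalSpace M]
    [ChartedSpace H M]
    (D : (∀ x : M, TangentSpace I x) → (∀ x : M, TangentSpace I x) → ∀ x : M, TangentSpace I x)
    (X Y Z B : ∀ x : M, TangentSpace I x) : ∀ x : M, TangentSpace I x :=
  fun x => D X (D Y Z) x - D Y (D X Z) x - D B Z x

/-- The tensor `B_f(X,Y) = c f (X(Y(f)) - (D_X Y)(f)) + c X(f) Y(f) - g(X,Y)`. -/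
def Btensor {E : Type*} [NormedAddCommGroup E] [NormedSpace ℝ E] {H : Type*}
    [TopologicalSpace H] (I : ModelWithCorners ℝ E H) {M : Type*} [TopologicalSpace M]
    [ChartedSpace H M] (g : ∀ x : M, TangentSpace I x → TangentSpace I x → ℝ)
    (c : ℝ) (f : M → ℝ)
    (D : (∀ x : M, TangentSpace I x) → (∀ x : M, TangentSpace I x) → ∀ x : M, TangentSpace I x)
    (X Y : ∀ x : M, TangentSpace I x) : M → ℝ :=
  fun x => c * f x * (vfd I X (vfd I Y f) x - vfd I (D X Y) f x)
    + c * vfd I X f x * vfd I Y f x - g x (X x) (Y x)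

/-- The Hessian of `f` with respect to the connection `D`:
`H^f(X,Y) = X(Y(f)) - (D_X Y)(f)`. -/
def Hess {E : Type*} [NormedAddCommGroup E] [NormedSpace ℝ E] {H : Type*}
    [TopologicalSpace H] (I : ModelWithCorners ℝ E H) {M : Type*} [TopologicalSpace M]
    [ChartedSpace H M] (f : M → ℝ)
    (D : (∀ x : M, TangentSpace I x) → (∀ x : M, TangentSpace I x) → ∀ x : M, TangentSpace I x)
    (X Y : ∀ x : M, TangentSpace I x) : M → ℝ :=
  fun x => vfd I X (vfd I Y f) x - vfd I (D X Y) f x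

variable {E₁ : Type*} [NormedAddCommGroup E₁] [NormedSpace ℝ E₁]
  {H₁ : Type*} [TopologicalSpace H₁] {I₁ : ModelWithCorners ℝ E₁ H₁}
  {M₁ : Type*} [TopologicalSpace M₁] [ChartedSpace H₁ M₁] [IsManifold I₁ (⊤ : ℕ∞) M₁]
  {E₂ : Type*} [NormedAddCommGroup E₂] [NormedSpace ℝ E₂]
  {H₂ : Type*} [TopologicalSpace H₂] {I₂ : ModelWithCorners ℝ E₂ H₂}
  {M₂ : Type*} [TopologicalSpace M₂] [ChartedSpace H₂ M₂] [IsManifold I₂ (⊤ : ℕ∞) M₂]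

/-- The horizontal lift of a vector field on `M₁` to `M₁ × M₂`: the unique vector field
projecting to `X₁ ∘ π₁` under `dπ₁` and to `0` under `dπ₂`. -/
def hLift (X₁ : ∀ x : M₁, TangentSpace I₁ x) :
    ∀ p : M₁ × M₂, TangentSpace (I₁.prod I₂) p :=
  fun p => (X₁ p.1, (0 : TangentSpace I₂ p.2))

/-- The vertical lift of a vector field on `M₂` to `M₁ × M₂`. -/
def vLift (X₂ : ∀ y : M₂, TangentSpace I₂ y) :
    ∀ p : M₁ × M₂, TangentSpace (I₁.prod I₂) p :=
  fun p => ((0 : TangentSpace I₁ p.1), X₂ p.2)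

/-- The generalized warped product tensor
`G_{f₁f₂} = (f₂ᵛ)² π₁*g₁ + (f₁ʰ)² π₂*g₂ + c f₁ʰ f₂ᵛ (df₁ʰ ⊗ df₂ᵛ + df₂ᵛ ⊗ df₁ʰ)`. -/
def Gmetric (I₁ : ModelWithCorners ℝ E₁ H₁) (I₂ : ModelWithCorners ℝ E₂ H₂)
    (g₁ : ∀ x : M₁, TangentSpace I₁ x → TangentSpace I₁ x → ℝ)
    (g₂ : ∀ y : M₂, TangentSpace I₂ y → TangentSpace I₂ y → ℝ)
    (c : ℝ) (f₁ : M₁ → ℝ) (f₂ : M₂ → ℝ) :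
    ∀ p : M₁ × M₂, TangentSpace (I₁.prod I₂) p → TangentSpace (I₁.prod I₂) p → ℝ :=
  fun p v w =>
    (f₂ p.2) ^ 2 * g₁ p.1 v.1 w.1 + (f₁ p.1) ^ 2 * g₂ p.2 v.2 w.2 +
      c * f₁ p.1 * f₂ p.2 *
        (dfn I₁ f₁ p.1 v.1 * dfn I₂ f₂ p.2 w.2 + dfn I₂ f₂ p.2 v.2 * dfn I₁ f₁ p.1 w.1)

/-- The tensor `g̃_{f₁f₂} = π₁*g₁ + (f₁ʰ)² π₂*g₂ + c² (f₂ᵛ)² df₁ʰ ⊗ df₁ʰ`. -/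
def Gtilde (I₁ : ModelWithCorners ℝ E₁ H₁) (I₂ : ModelWithCorners ℝ E₂ H₂)
    (g₁ : ∀ x : M₁, TangentSpace I₁ x → TangentSpace I₁ x → ℝ)
    (g₂ : ∀ y : M₂, TangentSpace I₂ y → TangentSpace I₂ y → ℝ)
    (c : ℝ) (f₁ : M₁ → ℝ) (f₂ : M₂ → ℝ) :
    ∀ p : M₁ × M₂, TangentSpace (I₁.prod I₂) p → TangentSpace (I₁.prod I₂) p → ℝ :=
  fun p v w =>
    g₁ p.1 v.1 w.1 + (f₁ p.1) ^ 2 * g₂ p.2 v.2 w.2 +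
      c ^ 2 * (f₂ p.2) ^ 2 *
        dfn I₁ f₁ p.1 v.1 * dfn I₁ f₁ p.1 w.1

lemma add_add_two_mul_pos {X Y a b k : ℝ} (hX : 0 ≤ X) (hY : 0 ≤ Y) (hXY : 0 < X + Y)
    (hab : a ^ 2 * b ^ 2 ≤ k * (X * Y)) (hk : k < 1) : 0 < X + Y + 2 * a * b := by
  by_contra! hneg
  rcases (mul_nonneg hX hY).eq_or_lt with hXY0 | hXYpos
  · have : a * b = 0 := by nlinarith
    nlinarith
  · -- `(2ab)² ≤ 4k XY < 4XY ≤ (X + Y)²`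
    nlinarith [sq_nonneg (X - Y)]

section Manifold

variable {E : Type*} [NormedAddCommGroup E] [NormedSpace ℝ E] {H : Type*}
  [TopologicalSpace H] {I : ModelWithCorners ℝ E H} {M : Type*} [TopologicalSpace M]
  [ChartedSpace H M]

lemma dfn_smul (f : M → ℝ) (x : M) (a : ℝ) (v : TangentSpace I x) :
    dfn I f x (a • v) = a * dfn I f x v :=
  (mfderiv I 𝓘(ℝ, ℝ) f x).map_smul a v

variable {g : ∀ x : M, TangentSpace I x → TangentSpace I x → ℝ}

namespace IsRiemannianMetric

def toBilinForm (hg : IsRiemannianMetric I g) (x : M) :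
    LinearMap.BilinForm ℝ (TangentSpace I x) :=
  LinearMap.mk₂ ℝ (g x)
    (fun u u' v => by rw [hg.2.1, (hg.1 x v).map_add, hg.2.1 x v, hg.2.1 x v])
    (fun a u v => by rw [hg.2.1, (hg.1 x v).map_smul, hg.2.1 x v])
    (fun u v v' => (hg.1 x u).map_add v v')
    (fun a u v => (hg.1 x u).map_smul a v)

@[simp]
lemma toBilinForm_apply (hg : IsRiemannianMetric I g) (x : M) (u v : TangentSpace I x) :
    hg.toBilinForm x u v = g x u v :=
  rfl

lemma apply_self_nonneg (hg : IsRiemannianMetric I g) (x : M) (v : TangentSpace I x) :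
    0 ≤ g x v v := by
  rcases eq_or_ne v 0 with rfl | hv
  · exact ((hg.1 x 0).map_zero).ge
  · exact (hg.2.2 x v hv).le

lemma apply_smul_smul (hg : IsRiemannianMetric I g) (x : M) (a b : ℝ)
    (u v : TangentSpace I x) :
    g x (a • u) (b • v) = a * b * g x u v := by
  change hg.toBilinForm x (a • u) (b • v) = _
  simp only [map_smul, LinearMap.smul_apply, toBilinForm_apply, smul_eq_mul]
  ring

lemma apply_sq_le (hg : IsRiemannianMetric I g) (x : M) (u v : TangentSpace I x) :
    g x u v ^ 2 ≤ g x u u * g x v v := by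
  simpa [sq, hg.2.1 x v u] using
    (hg.toBilinForm x).apply_mul_apply_le_of_forall_zero_le (hg.apply_self_nonneg x) u v

end IsRiemannianMetric

lemma IsGradient.dfn_sq_le (hg : IsRiemannianMetric I g) {f : M → ℝ}
    {G : ∀ x : M, TangentSpace I x} (hG : IsGradient I g f G) (x : M) (v : TangentSpace I x) :
    dfn I f x v ^ 2 ≤ g x (G x) (G x) * g x v v := by
  rw [← hG x v]
  exact hg.apply_sq_le x (G x) v

end Manifold

section Gmetric

variable {g₁ : ∀ x : M₁, TangentSpace I₁ x → TangentSpace I₁ x → ℝ}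
  {g₂ : ∀ y : M₂, TangentSpace I₂ y → TangentSpace I₂ y → ℝ} {c : ℝ} {f₁ : M₁ → ℝ} {f₂ : M₂ → ℝ}

omit [IsManifold I₁ (⊤ : ℕ∞) M₁] [IsManifold I₂ (⊤ : ℕ∞) M₂]

lemma Gmetric_self (p : M₁ × M₂) (v : TangentSpace (I₁.prod I₂) p) :
    Gmetric I₁ I₂ g₁ g₂ c f₁ f₂ p v v =
      f₂ p.2 ^ 2 * g₁ p.1 v.1 v.1 + f₁ p.1 ^ 2 * g₂ p.2 v.2 v.2 +
        2 * (c * f₁ p.1 * f₂ p.2 * dfn I₁ f₁ p.1 v.1) * dfn I₂ f₂ p.2 v.2 := by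
  simp only [Gmetric]
  ring

lemma Gmetric_symm (hg₁ : IsRiemannianMetric I₁ g₁) (hg₂ : IsRiemannianMetric I₂ g₂)
    (p : M₁ × M₂) (v w : TangentSpace (I₁.prod I₂) p) :
    Gmetric I₁ I₂ g₁ g₂ c f₁ f₂ p v w = Gmetric I₁ I₂ g₁ g₂ c f₁ f₂ p w v := by
  simp only [Gmetric, hg₁.2.1 p.1 v.1 w.1, hg₂.2.1 p.2 v.2 w.2]
  ring

lemma isLinearMap_Gmetric (hg₁ : IsRiemannianMetric I₁ g₁) (hg₂ : IsRiemannianMetric I₂ g₂)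
    (p : M₁ × M₂) (v : TangentSpace (I₁.prod I₂) p) :
    IsLinearMap ℝ (Gmetric I₁ I₂ g₁ g₂ c f₁ f₂ p v) where
  map_add w w' := by
    have d₁ : dfn I₁ f₁ p.1 (w + w').1 = dfn I₁ f₁ p.1 w.1 + dfn I₁ f₁ p.1 w'.1 := map_add _ _ _
    have d₂ : dfn I₂ f₂ p.2 (w + w').2 = dfn I₂ f₂ p.2 w.2 + dfn I₂ f₂ p.2 w'.2 := map_add _ _ _
    have e₁ : g₁ p.1 v.1 (w + w').1 = g₁ p.1 v.1 w.1 + g₁ p.1 v.1 w'.1 :=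
      (hg₁.1 p.1 v.1).map_add _ _
    have e₂ : g₂ p.2 v.2 (w + w').2 = g₂ p.2 v.2 w.2 + g₂ p.2 v.2 w'.2 :=
      (hg₂.1 p.2 v.2).map_add _ _
    simp only [Gmetric, d₁, d₂, e₁, e₂]
    ring
  map_smul a w := by
    have d₁ : dfn I₁ f₁ p.1 (a • w).1 = a * dfn I₁ f₁ p.1 w.1 := dfn_smul _ _ _ _
    have d₂ : dfn I₂ f₂ p.2 (a • w).2 = a * dfn I₂ f₂ p.2 w.2 := dfn_smul _ _ _ _
    have e₁ : g₁ p.1 v.1 (a • w).1 = a * g₁ p.1 v.1 w.1 := (hg₁.1 p.1 v.1).map_smul _ _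
    have e₂ : g₂ p.2 v.2 (a • w).2 = a * g₂ p.2 v.2 w.2 := (hg₂.1 p.2 v.2).map_smul _ _
    simp only [Gmetric, d₁, d₂, e₁, e₂, smul_eq_mul]
    ring

lemma Gmetric_self_pos (hg₁ : IsRiemannianMetric I₁ g₁) (hg₂ : IsRiemannianMetric I₂ g₂)
    {grad₁ : ∀ x : M₁, TangentSpace I₁ x} (hgrad₁ : IsGradient I₁ g₁ f₁ grad₁)
    {grad₂ : ∀ y : M₂, TangentSpace I₂ y} (hgrad₂ : IsGradient I₂ g₂ f₂ grad₂)
    {p : M₁ × M₂} (hf₁ : f₁ p.1 ≠ 0) (hf₂ : f₂ p.2 ≠ 0)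
    (hlt : c ^ 2 * g₁ p.1 (grad₁ p.1) (grad₁ p.1) * g₂ p.2 (grad₂ p.2) (grad₂ p.2) < 1)
    {v : TangentSpace (I₁.prod I₂) p} (hv : v ≠ 0) :
    0 < Gmetric I₁ I₂ g₁ g₂ c f₁ f₂ p v v := by
  set A := g₁ p.1 v.1 v.1
  set B := g₂ p.2 v.2 v.2
  have hA : 0 ≤ A := hg₁.apply_self_nonneg p.1 v.1
  have hB : 0 ≤ B := hg₂.apply_self_nonneg p.2 v.2
  have hAB : 0 < A ∨ 0 < B := by
    by_cases h₁ : v.1 = 0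
    · exact Or.inr (hg₂.2.2 p.2 v.2 fun h₂ => hv (Prod.ext h₁ h₂))
    · exact Or.inl (hg₁.2.2 p.1 v.1 h₁)
  have hcs : dfn I₁ f₁ p.1 v.1 ^ 2 * dfn I₂ f₂ p.2 v.2 ^ 2 ≤
      g₁ p.1 (grad₁ p.1) (grad₁ p.1) * A * (g₂ p.2 (grad₂ p.2) (grad₂ p.2) * B) :=
    mul_le_mul (hgrad₁.dfn_sq_le hg₁ p.1 v.1) (hgrad₂.dfn_sq_le hg₂ p.2 v.2) (sq_nonneg _)
      (mul_nonneg (hg₁.apply_self_nonneg p.1 _) hA)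
  rw [Gmetric_self]
  refine add_add_two_mul_pos (by positivity) (by positivity) ?_ ?_ hlt
  · rcases hAB with hA' | hB' <;> positivity
  · calc (c * f₁ p.1 * f₂ p.2 * dfn I₁ f₁ p.1 v.1) ^ 2 * dfn I₂ f₂ p.2 v.2 ^ 2
        = c ^ 2 * f₁ p.1 ^ 2 * f₂ p.2 ^ 2 *
            (dfn I₁ f₁ p.1 v.1 ^ 2 * dfn I₂ f₂ p.2 v.2 ^ 2) := by ring
      _ ≤ c ^ 2 * f₁ p.1 ^ 2 * f₂ p.2 ^ 2 *
            (g₁ p.1 (grad₁ p.1) (grad₁ p.1) * A * (g₂ p.2 (grad₂ p.2) (grad₂ p.2) * B)) := by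
          gcongr
      _ = _ := by ring

lemma Gmetric_smul_gradient_self (hg₁ : IsRiemannianMetric I₁ g₁)
    (hg₂ : IsRiemannianMetric I₂ g₂)
    {grad₁ : ∀ x : M₁, TangentSpace I₁ x} (hgrad₁ : IsGradient I₁ g₁ f₁ grad₁)
    {grad₂ : ∀ y : M₂, TangentSpace I₂ y} (hgrad₂ : IsGradient I₂ g₂ f₂ grad₂)
    (p : M₁ × M₂) (s t : ℝ) :
    Gmetric I₁ I₂ g₁ g₂ c f₁ f₂ p ((s • grad₁ p.1, t • grad₂ p.2) : TangentSpace (I₁.prod I₂) p)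
        ((s • grad₁ p.1, t • grad₂ p.2) : TangentSpace (I₁.prod I₂) p) =
      f₂ p.2 ^ 2 * s ^ 2 * g₁ p.1 (grad₁ p.1) (grad₁ p.1) +
        f₁ p.1 ^ 2 * t ^ 2 * g₂ p.2 (grad₂ p.2) (grad₂ p.2) +
        2 * c * f₁ p.1 * f₂ p.2 * s * t *
          g₁ p.1 (grad₁ p.1) (grad₁ p.1) * g₂ p.2 (grad₂ p.2) (grad₂ p.2) := by
  refine (Gmetric_self p _).trans ?_
  dsimp only
  rw [hg₁.apply_smul_smul, hg₂.apply_smul_smul, dfn_smul, dfn_smul, ← hgrad₁, ← hgrad₂]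
  ring

lemma lt_one_of_isRiemannianMetric_Gmetric (hg₁ : IsRiemannianMetric I₁ g₁)
    (hg₂ : IsRiemannianMetric I₂ g₂)
    {grad₁ : ∀ x : M₁, TangentSpace I₁ x} (hgrad₁ : IsGradient I₁ g₁ f₁ grad₁)
    {grad₂ : ∀ y : M₂, TangentSpace I₂ y} (hgrad₂ : IsGradient I₂ g₂ f₂ grad₂)
    (hG : IsRiemannianMetric (I₁.prod I₂) (Gmetric I₁ I₂ g₁ g₂ c f₁ f₂))
    {p : M₁ × M₂} (hf₁ : f₁ p.1 ≠ 0) (hf₂ : f₂ p.2 ≠ 0) :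
    c ^ 2 * g₁ p.1 (grad₁ p.1) (grad₁ p.1) * g₂ p.2 (grad₂ p.2) (grad₂ p.2) < 1 := by
  set Q₁ := g₁ p.1 (grad₁ p.1) (grad₁ p.1)
  set Q₂ := g₂ p.2 (grad₂ p.2) (grad₂ p.2)
  rcases eq_or_ne (grad₂ p.2) 0 with h₂ | h₂
  · simp [Q₂, h₂, (hg₂.1 p.2 0).map_zero]
  have hQ₂ : 0 < Q₂ := hg₂.2.2 p.2 _ h₂
  set v : TangentSpace (I₁.prod I₂) p := ((-(c * f₁ p.1 * Q₂)) • grad₁ p.1, f₂ p.2 • grad₂ p.2)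
  -- `s = -c f₁ Q₂` minimizes `s ↦ G((s grad f₁, f₂ grad f₂), (s grad f₁, f₂ grad f₂))`
  have hGv : Gmetric I₁ I₂ g₁ g₂ c f₁ f₂ p v v =
      f₁ p.1 ^ 2 * f₂ p.2 ^ 2 * Q₂ * (1 - c ^ 2 * Q₁ * Q₂) := by
    rw [Gmetric_smul_gradient_self hg₁ hg₂ hgrad₁ hgrad₂]
    ring
  have hpos := hG.2.2 p v fun h => smul_ne_zero hf₂ h₂ (congrArg Prod.snd h)
  rw [hGv] at hpos
  have : 0 < f₁ p.1 ^ 2 * f₂ p.2 ^ 2 * Q₂ := by positivity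
  linarith [(pos_iff_pos_of_mul_pos hpos).mp this]

end Gmetric

theorem statement3_general
    (g₁ : ∀ x : M₁, TangentSpace I₁ x → TangentSpace I₁ x → ℝ)
    (hg₁ : IsRiemannianMetric I₁ g₁)
    (g₂ : ∀ y : M₂, TangentSpace I₂ y → TangentSpace I₂ y → ℝ)
    (hg₂ : IsRiemannianMetric I₂ g₂)
    (f₁ : M₁ → ℝ) (hf₁pos : ∀ x : M₁, 0 < f₁ x)
    (f₂ : M₂ → ℝ) (hf₂pos : ∀ y : M₂, 0 < f₂ y)
    (c : ℝ)
    (grad₁ : ∀ x : M₁, TangentSpace I₁ x) (hgrad₁ : IsGradient I₁ g₁ f₁ grad₁)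
    (grad₂ : ∀ y : M₂, TangentSpace I₂ y) (hgrad₂ : IsGradient I₂ g₂ f₂ grad₂)
 :
    IsRiemannianMetric (I₁.prod I₂) (Gmetric I₁ I₂ g₁ g₂ c f₁ f₂) ↔
      ∀ p : M₁ × M₂,
        0 ≤ c ^ 2 * g₁ p.1 (grad₁ p.1) (grad₁ p.1) * g₂ p.2 (grad₂ p.2) (grad₂ p.2) ∧
        c ^ 2 * g₁ p.1 (grad₁ p.1) (grad₁ p.1) * g₂ p.2 (grad₂ p.2) (grad₂ p.2) < 1 := by
  constructor
  · intro hG p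
    have hQ₁ := hg₁.apply_self_nonneg p.1 (grad₁ p.1)
    have hQ₂ := hg₂.apply_self_nonneg p.2 (grad₂ p.2)
    exact ⟨by positivity, lt_one_of_isRiemannianMetric_Gmetric hg₁ hg₂ hgrad₁ hgrad₂ hG
      (hf₁pos p.1).ne' (hf₂pos p.2).ne'⟩
  · intro h
    exact ⟨isLinearMap_Gmetric hg₁ hg₂, Gmetric_symm hg₁ hg₂, fun p _ hv =>
      Gmetric_self_pos hg₁ hg₂ hgrad₁ hgrad₂ (hf₁pos p.1).ne' (hf₂pos p.2).ne' (h p).2 hv⟩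

/-- Proposition 2.4: `G_{f₁f₂}` is a Riemannian metric iff
`0 ≤ c² g₁(grad f₁, grad f₁)ʰ g₂(grad f₂, grad f₂)ᵛ < 1` everywhere. -/
theorem statement3 [ConnectedSpace M₁] [ConnectedSpace M₂]
    (g₁ : ∀ x : M₁, TangentSpace I₁ x → TangentSpace I₁ x → ℝ)
    (hg₁ : IsRiemannianMetric I₁ g₁)
    (g₂ : ∀ y : M₂, TangentSpace I₂ y → TangentSpace I₂ y → ℝ)
    (hg₂ : IsRiemannianMetric I₂ g₂)
    (f₁ : M₁ → ℝ) (hf₁ : ContMDiff I₁ 𝓘(ℝ, ℝ) (⊤ : ℕ∞) f₁) (hf₁pos : ∀ x : M₁, 0 < f₁ x)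
    (f₂ : M₂ → ℝ) (hf₂ : ContMDiff I₂ 𝓘(ℝ, ℝ) (⊤ : ℕ∞) f₂) (hf₂pos : ∀ y : M₂, 0 < f₂ y)
    (c : ℝ)
    (grad₁ : ∀ x : M₁, TangentSpace I₁ x) (hgrad₁ : IsGradient I₁ g₁ f₁ grad₁)
    (grad₂ : ∀ y : M₂, TangentSpace I₂ y) (hgrad₂ : IsGradient I₂ g₂ f₂ grad₂)
 :
    IsRiemannianMetric (I₁.prod I₂) (Gmetric I₁ I₂ g₁ g₂ c f₁ f₂) ↔
      ∀ p : M₁ × M₂,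
        0 ≤ c ^ 2 * g₁ p.1 (grad₁ p.1) (grad₁ p.1) * g₂ p.2 (grad₂ p.2) (grad₂ p.2) ∧
        c ^ 2 * g₁ p.1 (grad₁ p.1) (grad₁ p.1) * g₂ p.2 (grad₂ p.2) (grad₂ p.2) < 1 :=
  statement3_general g₁ hg₁ g₂ hg₂ f₁ hf₁pos f₂ hf₂pos c grad₁ hgrad₁ grad₂ hgrad₂
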